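/- arXiv:2308.08903 — 2 statements merged into one kernel-verified Lean document; each statement's English description precedes it below -/
import Mathlib

section
/- Corollary 5.2 (upper bound): For homogeneous divisible items, the incentive ratio of the Maximum Nash Welfare mechanism is at most 2. Precisely: let (v_1,…,v_n) be a profile of item values and v_1' a misreport by agent 1. If x is a complete allocation maximizing ∏_{i=1}^n u_i(x) with respect to the true profile, and x' is a complete allocation maximizing (Σ_t v'_{1,t} x'_{1,t}) · ∏_{i=2}^n u_i(x') (i.e., x' is MNW for the profile (v_1', v_2,…,v_n)), then Σ_t v_{1,t} x'_{1,t} ≤ 2 · Σ_t v_{1,t} x_{1,t}. -/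
/-- An allocation of `m` homogeneous divisible items among `n` agents: a matrix of
fractions in `[0,1]` whose column sums are at most `1`. -/
def ItemAlloc {n m : ℕ} (x : Fin n → Fin m → ℝ) : Prop :=
  (∀ i t, x i t ∈ Set.Icc (0 : ℝ) 1) ∧ ∀ t, (∑ i, x i t) ≤ 1

/-- A complete allocation: every item is fully allocated. -/
def ItemAllocComplete {n m : ℕ} (x : Fin n → Fin m → ℝ) : Prop :=
  ItemAlloc x ∧ ∀ t, (∑ i, x i t) = 1

/-- Agent `i`'s utility under the values `v` and the allocation `x`. -/
def itemUtil {n m : ℕ} (v : Fin n → Fin m → ℝ) (x : Fin n → Fin m → ℝ) (i : Fin n) : ℝ :=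
  ∑ t, v i t * x i t

/-- A valid profile of item values: nonnegative with positive total for each agent. -/
def ValidItemProfile {n m : ℕ} (v : Fin n → Fin m → ℝ) : Prop :=
  ∀ i, (∀ t, 0 ≤ v i t) ∧ 0 < ∑ t, v i t

/-- An MNW allocation for homogeneous divisible items. -/
def IsItemMNW {n m : ℕ} (v : Fin n → Fin m → ℝ) (x : Fin n → Fin m → ℝ) : Prop :=
  ItemAlloc x ∧ ∀ z : Fin n → Fin m → ℝ, ItemAlloc z →
    (∏ i, itemUtil v z i) ≤ ∏ i, itemUtil v x i

/-- A complete MNW allocation for homogeneous divisible items (no free disposal). -/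
def IsItemCompleteMNW {n m : ℕ} (v : Fin n → Fin m → ℝ) (x : Fin n → Fin m → ℝ) : Prop :=
  ItemAllocComplete x ∧ ∀ z : Fin n → Fin m → ℝ, ItemAllocComplete z →
    (∏ i, itemUtil v z i) ≤ ∏ i, itemUtil v x i

/-!
At an MNW allocation `x` every utility is positive, and moving from `x` towards any complete
allocation `z` cannot increase the Nash product, so its derivative along the segment is
nonpositive: `∑ᵢ uᵢ(z) / uᵢ(x) ≤ N`. Comparing the truthful outcome `x` with the manipulated
one `x'` in both directions gives `r + S ≤ n + 1` and `T ≤ n + 1`, where `r = u₁(x') / u₁(x)`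
and `S`, `T` are the sums of the other agents' ratios `uᵢ(x') / uᵢ(x)` and their
reciprocals (the misreport does not change the other agents' values). By AM-HM `n² ≤ S T`,
hence `S ≥ n - 1` and `r ≤ 2`.
-/

open Finset Filter Topology

lemma card_sq_le_sum_mul_sum_inv {ι R : Type*} [Field R] [LinearOrder R] [IsStrictOrderedRing R]
    (s : Finset ι) {f : ι → R} (hf : ∀ i ∈ s, 0 < f i) :
    (#s : R) ^ 2 ≤ (∑ i ∈ s, f i) * ∑ i ∈ s, (f i)⁻¹ := by
  simpa using sum_sq_le_sum_mul_sum_of_sq_le_mul s (r := fun _ => 1)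
    (fun i hi => (hf i hi).le) (fun i hi => (inv_pos.2 (hf i hi)).le)
    (fun i hi => by simp [mul_inv_cancel₀ (hf i hi).ne'])

lemma sum_div_nonpos_of_prod_add_mul_le {ι : Type*} (s : Finset ι) {a d : ι → ℝ}
    (ha : ∀ i ∈ s, 0 < a i)
    (hmax : ∀ᶠ ε in 𝓝[>] (0 : ℝ), ∏ i ∈ s, (a i + ε * d i) ≤ ∏ i ∈ s, a i) :
    ∑ i ∈ s, d i / a i ≤ 0 := by
  classical
  set f : ℝ → ℝ := fun ε => ∏ i ∈ s, (a i + ε * d i)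
  have hderiv : HasDerivAt f (∑ i ∈ s, (∏ j ∈ s.erase i, a j) * d i) 0 := by
    simpa using HasDerivAt.fun_finsetProd (u := s) fun i _ =>
      ((hasDerivAt_id (0 : ℝ)).mul_const (d i)).const_add (a i)
  have hderiv_nonpos : ∑ i ∈ s, (∏ j ∈ s.erase i, a j) * d i ≤ 0 := by
    refine le_of_tendsto hderiv.tendsto_slope_zero_right ?_
    filter_upwards [hmax, self_mem_nhdsWithin] with ε hε (hε_pos : 0 < ε)
    simpa [f] using smul_nonpos_of_nonneg_of_nonpos (inv_pos.2 hε_pos).le (sub_nonpos.2 hε)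
  have hderiv_eq : ∑ i ∈ s, (∏ j ∈ s.erase i, a j) * d i = (∏ i ∈ s, a i) * ∑ i ∈ s, d i / a i := by
    rw [mul_sum]
    refine sum_congr rfl fun i hi => ?_
    rw [← prod_erase_mul s a hi]
    field_simp [(ha i hi).ne']
  rw [hderiv_eq] at hderiv_nonpos
  exact nonpos_of_mul_nonpos_right hderiv_nonpos (prod_pos ha)

section Items

variable {N m : ℕ}

lemma itemUtil_nonneg {v x : Fin N → Fin m → ℝ} {i : Fin N} (hv : ∀ t, 0 ≤ v i t)
    (hx : ItemAlloc x) : 0 ≤ itemUtil v x i :=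
  sum_nonneg fun t _ => mul_nonneg (hv t) (hx.1 i t).1

lemma itemUtil_update_of_ne {v x : Fin N → Fin m → ℝ} {i j : Fin N} (w : Fin m → ℝ)
    (hji : j ≠ i) : itemUtil (Function.update v i w) x j = itemUtil v x j := by
  simp [itemUtil, Function.update_of_ne hji]

lemma itemUtil_add_mul_sub (v x z : Fin N → Fin m → ℝ) (ε : ℝ) (i : Fin N) :
    itemUtil v (fun i t => x i t + ε * (z i t - x i t)) i =
      itemUtil v x i + ε * (itemUtil v z i - itemUtil v x i) := by
  simp only [itemUtil, mul_sum, ← sum_sub_distrib, ← sum_add_distrib]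
  exact sum_congr rfl fun t _ => by ring

lemma ValidItemProfile.update {v : Fin N → Fin m → ℝ} (hv : ValidItemProfile v) (i : Fin N)
    {w : Fin m → ℝ} (hw : (∀ t, 0 ≤ w t) ∧ 0 < ∑ t, w t) :
    ValidItemProfile (Function.update v i w) := by
  intro j
  rcases eq_or_ne j i with rfl | hji
  · simpa using hw
  · simpa [Function.update_of_ne hji] using hv j

lemma ItemAllocComplete.add_mul_sub {x z : Fin N → Fin m → ℝ} (hx : ItemAllocComplete x)
    (hz : ItemAllocComplete z) {ε : ℝ} (hε : ε ∈ Set.Icc (0 : ℝ) 1) :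
    ItemAllocComplete fun i t => x i t + ε * (z i t - x i t) := by
  have hsum : ∀ t, ∑ i, (x i t + ε * (z i t - x i t)) = 1 := fun t => by
    rw [sum_add_distrib, ← mul_sum, sum_sub_distrib, hx.2 t, hz.2 t]
    ring
  refine ⟨⟨fun i t => ?_, fun t => (hsum t).le⟩, hsum⟩
  obtain ⟨hx0, hx1⟩ := hx.1.1 i t
  obtain ⟨hz0, hz1⟩ := hz.1.1 i t
  constructor <;> nlinarith [hε.1, hε.2]

lemma itemAllocComplete_uniform [NeZero N] :
    ItemAllocComplete fun (_ : Fin N) (_ : Fin m) => (N : ℝ)⁻¹ := by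
  have hN : (1 : ℝ) ≤ N := Nat.one_le_cast.2 (Nat.pos_of_neZero N)
  have hsum : ∀ t : Fin m, ∑ _ : Fin N, (N : ℝ)⁻¹ = 1 := fun _ => by
    simp [mul_inv_cancel₀ (NeZero.ne (N : ℝ))]
  exact ⟨⟨fun _ _ => ⟨by positivity, inv_le_one_of_one_le₀ hN⟩, fun t => (hsum t).le⟩, hsum⟩

lemma IsItemCompleteMNW.itemUtil_pos [NeZero N] {v x : Fin N → Fin m → ℝ}
    (hv : ValidItemProfile v) (hx : IsItemCompleteMNW v x) (i : Fin N) :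
    0 < itemUtil v x i := by
  have huniform_pos : ∀ j, 0 < itemUtil v (fun _ _ => (N : ℝ)⁻¹) j := fun j => by
    simpa [itemUtil, ← sum_mul] using mul_pos (hv j).2 (inv_pos.2 (Nat.cast_pos.2 (Nat.pos_of_neZero N)))
  have hprod_pos : 0 < ∏ j, itemUtil v x j :=
    (prod_pos fun j _ => huniform_pos j).trans_le (hx.2 _ itemAllocComplete_uniform)
  exact (itemUtil_nonneg (hv i).1 hx.1.1).lt_of_ne
    (prod_ne_zero_iff.1 hprod_pos.ne' i (mem_univ i)).symm

lemma IsItemCompleteMNW.sum_itemUtil_div_le {v x z : Fin N → Fin m → ℝ}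
    (hx : IsItemCompleteMNW v x) (hpos : ∀ i, 0 < itemUtil v x i) (hz : ItemAllocComplete z) :
    ∑ i, itemUtil v z i / itemUtil v x i ≤ N := by
  have hdir := sum_div_nonpos_of_prod_add_mul_le univ (a := itemUtil v x)
    (d := fun i => itemUtil v z i - itemUtil v x i) (fun i _ => hpos i) <| by
      filter_upwards [Ioc_mem_nhdsGT zero_lt_one] with ε hε
      simpa only [itemUtil_add_mul_sub] using
        hx.2 _ (hx.1.add_mul_sub hz (Set.Ioc_subset_Icc_self hε))
  simpa [sub_div, div_self (hpos _).ne', sum_sub_distrib] using hdir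

end Items

/-- Corollary 5.2 (upper bound): for homogeneous divisible items, the incentive
ratio of the MNW mechanism is at most `2`: if `x` is a complete MNW allocation for
the true profile `v` and `x'` is a complete MNW allocation for the profile in which
agent 1 (index `0`) misreports `v1'`, then agent 1's true utility under `x'` is at
most twice his true utility under `x`. -/
theorem mnw_items_incentive_ratio_upper (n m : ℕ) (v : Fin (n + 1) → Fin m → ℝ)
    (v1' : Fin m → ℝ) (hv : ValidItemProfile v)
    (hv1' : (∀ t, 0 ≤ v1' t) ∧ 0 < ∑ t, v1' t)
    (x x' : Fin (n + 1) → Fin m → ℝ)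
    (hx : IsItemCompleteMNW v x)
    (hx' : IsItemCompleteMNW (Function.update v 0 v1') x') :
    itemUtil v x' 0 ≤ 2 * itemUtil v x 0 := by
  have hv' := hv.update 0 hv1'
  have hpos := hx.itemUtil_pos hv
  have hpos' := hx'.itemUtil_pos hv'
  set S := ∑ i : Fin n, itemUtil v x' i.succ / itemUtil v x i.succ
  set T := ∑ i : Fin n, itemUtil v x i.succ / itemUtil v x' i.succ
  have hS : itemUtil v x' 0 / itemUtil v x 0 + S ≤ n + 1 := by
    simpa [Fin.sum_univ_succ] using hx.sum_itemUtil_div_le hpos hx'.1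
  have hT : T ≤ n + 1 := by
    have := hx'.sum_itemUtil_div_le hpos' hx.1
    simp only [Fin.sum_univ_succ, itemUtil_update_of_ne _ (Fin.succ_ne_zero _)] at this
    have h0 := div_nonneg (itemUtil_nonneg (hv' 0).1 hx.1.1) (hpos' 0).le
    push_cast at this
    linarith
  have hST : (n : ℝ) ^ 2 ≤ S * T := by
    simpa [S, T, inv_div] using card_sq_le_sum_mul_sum_inv univ (f := fun i : Fin n =>
      itemUtil v x' i.succ / itemUtil v x i.succ) fun i _ => by
        simpa [itemUtil_update_of_ne _ (Fin.succ_ne_zero i)] using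
          div_pos (hpos' i.succ) (hpos i.succ)
  have hS_nonneg : 0 ≤ S := sum_nonneg fun i _ =>
    div_nonneg (itemUtil_nonneg (hv i.succ).1 hx'.1.1) (hpos i.succ).le
  have hratio : itemUtil v x' 0 / itemUtil v x 0 ≤ 2 := by
    nlinarith [mul_le_mul_of_nonneg_left hT hS_nonneg]
  rw [div_le_iff₀ (hpos 0)] at hratio
  linarith
end

section
/- Corollary 2.2 (uniqueness of MNW utilities): If A and A' are both MNW allocations with respect to the same profile (f_1,…,f_n) of piecewise constant value density functions on [0,1], then v_i(A_i) = v_i(A_i') for every agent i ∈ {1,…,n}. -/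
open MeasureTheory Set

noncomputable def cakeval (f : ℝ → ℝ) (S : Set ℝ) : ℝ := ∫ x in S, f x

def PiecewiseConstant (f : ℝ → ℝ) : Prop :=
  ∃ (m : ℕ) (a : Fin (m + 1) → ℝ) (c : Fin m → ℝ),
    a 0 = 0 ∧ a (Fin.last m) = 1 ∧ Monotone a ∧
    ∀ t : Fin m, ∀ x ∈ Set.Ico (a t.castSucc) (a t.succ), f x = c t

def ValidDensity (f : ℝ → ℝ) : Prop :=
  PiecewiseConstant f ∧ (∀ x, 0 ≤ f x) ∧ 0 < cakeval f (Set.Icc 0 1)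

def FinUnionIcc (S : Set ℝ) : Prop :=
  ∃ (k : ℕ) (a b : Fin k → ℝ), S = ⋃ j, Set.Icc (a j) (b j)

def IsAllocOn {n : ℕ} (C : Set ℝ) (A : Fin n → Set ℝ) : Prop :=
  (∀ i, A i ⊆ C) ∧ (∀ i, FinUnionIcc (A i)) ∧
    Pairwise fun i j => volume (A i ∩ A j) = 0

def IsAlloc {n : ℕ} (A : Fin n → Set ℝ) : Prop := IsAllocOn (Set.Icc 0 1) A

def CompleteAlloc {n : ℕ} (A : Fin n → Set ℝ) : Prop := (⋃ i, A i) = Set.Icc (0 : ℝ) 1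

noncomputable def nashProd {n : ℕ} (f : Fin n → ℝ → ℝ) (A : Fin n → Set ℝ) : ℝ :=
  ∏ i, cakeval (f i) (A i)

def IsMNWOn {n : ℕ} (C : Set ℝ) (f : Fin n → ℝ → ℝ) (A : Fin n → Set ℝ) : Prop :=
  IsAllocOn C A ∧ ∀ B : Fin n → Set ℝ, IsAllocOn C B → nashProd f B ≤ nashProd f A

def IsMNW {n : ℕ} (f : Fin n → ℝ → ℝ) (A : Fin n → Set ℝ) : Prop :=
  IsMNWOn (Set.Icc 0 1) f A

def IsCompleteMNW {n : ℕ} (f : Fin n → ℝ → ℝ) (A : Fin n → Set ℝ) : Prop :=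
  IsAlloc A ∧ CompleteAlloc A ∧
    ∀ B : Fin n → Set ℝ, IsAlloc B → CompleteAlloc B → nashProd f B ≤ nashProd f A


/-!
Fix a partition of `[0,1]` so fine that every density is constant on each cell and every bundle
of `A` and `A'` is, up to finitely many points, a union of cells. Taking from each cell the part
between the fractions `s` and `t` of its length then scales every agent's value by `t - s`.
Cutting each cell into `n` equal parts gives an allocation in which all values are positive, so
the maximal Nash product is positive. Giving the left half of each cell to its owner in `A` and
the right half to its owner in `A'` gives an allocation in which every agent gets the average of
its two utilities; by strict AM–GM its Nash product would exceed the common Nash product of `A`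
and `A'` unless the utilities agree.
-/

lemma volume_Icc_inter_Icc_of_le {a b c d : ℝ} (h : b ≤ c) :
    volume (Icc a b ∩ Icc c d) = 0 := by
  rw [Icc_inter_Icc, Real.volume_Icc, ENNReal.ofReal_eq_zero]
  linarith [min_le_left b d, le_max_right a c]

lemma exists_castSucc_le_and_lt_succ {α : Type*} [LinearOrder α] {m : ℕ} (q : Fin (m + 1) → α)
    {x : α} (h0 : q 0 ≤ x) (hlast : x < q (Fin.last m)) :
    ∃ t : Fin m, q t.castSucc ≤ x ∧ x < q t.succ := by
  classical
  obtain ⟨k, hk, hmin⟩ := Finset.exists_min_image (Finset.univ.filter fun k => x < q k) id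
    ⟨Fin.last m, by simpa using hlast⟩
  simp only [Finset.mem_filter, Finset.mem_univ, true_and, id] at hk hmin
  obtain ⟨t, rfl⟩ := Fin.exists_succ_eq.2 (fun h : k = 0 => (h ▸ hk).not_ge h0)
  exact ⟨t, not_lt.1 fun h => (hmin _ h).not_gt Fin.castSucc_lt_succ, hk⟩

lemma finUnionIcc_iUnion_Icc {ι : Type*} [Finite ι] (a b : ι → ℝ) :
    FinUnionIcc (⋃ j, Icc (a j) (b j)) :=
  have := Fintype.ofFinite ι
  ⟨Fintype.card ι, a ∘ (Fintype.equivFin ι).symm, b ∘ (Fintype.equivFin ι).symm,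
    ((Fintype.equivFin ι).symm.iSup_comp (g := fun j => Icc (a j) (b j))).symm⟩

lemma FinUnionIcc.union {S T : Set ℝ} (hS : FinUnionIcc S) (hT : FinUnionIcc T) :
    FinUnionIcc (S ∪ T) := by
  obtain ⟨k, a, b, rfl⟩ := hS
  obtain ⟨k', a', b', rfl⟩ := hT
  rw [← iUnion_sumElim]
  convert finUnionIcc_iUnion_Icc (Sum.elim a a') (Sum.elim b b') using 3 with j
  cases j <;> rfl

lemma FinUnionIcc.exists_breakpoints {S : Set ℝ} (hS : FinUnionIcc S) :
    ∃ E : Finset ℝ, ∀ x y : ℝ, (∀ z ∈ E, z ∉ Ioo x y) → Ioo x y ⊆ S ∨ Disjoint (Ioo x y) S := by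
  obtain ⟨k, a, b, rfl⟩ := hS
  refine ⟨Finset.univ.image a ∪ Finset.univ.image b, fun x y hE => ?_⟩
  refine or_iff_not_imp_right.2 fun hmeet => ?_
  obtain ⟨z, hz, hzS⟩ := not_disjoint_iff.1 hmeet
  obtain ⟨l, hal, hlb⟩ := mem_iUnion.1 hzS
  have hax : a l ≤ x := not_lt.1 fun h => hE (a l) (by simp) ⟨h, hal.trans_lt hz.2⟩
  have hyb : y ≤ b l := not_lt.1 fun h => hE (b l) (by simp) ⟨hz.1.trans_le hlb, h⟩
  exact fun w hw => mem_iUnion.2 ⟨l, hax.trans hw.1.le, hw.2.le.trans hyb⟩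

lemma PiecewiseConstant.exists_breakpoints {f : ℝ → ℝ} (hf : PiecewiseConstant f) :
    ∃ E : Finset ℝ, ∀ x y : ℝ, 0 ≤ x → x < y → y ≤ 1 → (∀ z ∈ E, z ∉ Ioo x y) →
      ∃ c, ∀ z ∈ Ioo x y, f z = c := by
  obtain ⟨m, a, c, ha0, ha1, -, hc⟩ := hf
  refine ⟨Finset.univ.image a, fun x y hx hxy hy hE => ?_⟩
  obtain ⟨t, hat, hxt⟩ :=
    exists_castSucc_le_and_lt_succ a (ha0.trans_le hx) (ha1 ▸ hxy.trans_le hy)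
  have hyt : y ≤ a t.succ := not_lt.1 fun h => hE _ (by simp) ⟨hxt, h⟩
  exact ⟨c t, fun z hz => hc t z ⟨hat.trans hz.1.le, hz.2.trans_le hyt⟩⟩

lemma cakeval_nonneg {f : ℝ → ℝ} (hf : ∀ x, 0 ≤ f x) (S : Set ℝ) : 0 ≤ cakeval f S :=
  integral_nonneg hf

lemma cakeval_iUnion {ι : Type*} [Fintype ι] {f : ℝ → ℝ} {S : ι → Set ℝ}
    (hm : ∀ j, NullMeasurableSet (S j)) (hd : Pairwise fun j j' => AEDisjoint volume (S j) (S j'))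
    (hf : IntegrableOn f (⋃ j, S j)) :
    cakeval f (⋃ j, S j) = ∑ j, cakeval f (S j) := by
  rw [cakeval, integral_iUnion_ae hm hd hf, tsum_fintype]
  rfl

lemma cakeval_Icc_of_eqOn_Ioo {f : ℝ → ℝ} {a b c : ℝ} (hab : a ≤ b)
    (hf : ∀ x ∈ Ioo a b, f x = c) : cakeval f (Icc a b) = (b - a) * c := by
  rw [cakeval, setIntegral_congr_set Ioo_ae_eq_Icc.symm, setIntegral_congr_fun measurableSet_Ioo hf,
    setIntegral_const, Real.volume_real_Ioo_of_le hab, smul_eq_mul]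

lemma integrableOn_Ioo_of_eqOn {f : ℝ → ℝ} {a b c : ℝ} (hf : ∀ x ∈ Ioo a b, f x = c) :
    IntegrableOn f (Ioo a b) :=
  (integrableOn_const (by simp)).congr_fun (fun x hx => (hf x hx).symm) measurableSet_Ioo

lemma prod_mul_prod_lt_sq_prod_midpoint {ι : Type*} [Fintype ι] {x y : ι → ℝ}
    (hx : ∀ k, 0 < x k) (hy : ∀ k, 0 < y k) (hxy : x ≠ y) :
    (∏ k, x k) * ∏ k, y k < (∏ k, (x k + y k) / 2) ^ 2 := by
  obtain ⟨k, hk⟩ := Function.ne_iff.1 hxy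
  rw [← Finset.prod_mul_distrib, ← Finset.prod_pow]
  refine Finset.prod_lt_prod (fun k _ => mul_pos (hx k) (hy k))
    (fun k _ => by nlinarith [sq_nonneg (x k - y k)]) ⟨k, Finset.mem_univ k, ?_⟩
  nlinarith [sq_pos_of_ne_zero (sub_ne_zero.2 hk)]

structure IsUnitIntervalPartition {N : ℕ} (p : Fin (N + 1) → ℝ) : Prop where
  strictMono : StrictMono p
  map_zero : p 0 = 0
  map_last : p (Fin.last N) = 1

lemma exists_unitIntervalPartition_avoiding (E : Finset ℝ) :
    ∃ (N : ℕ) (p : Fin (N + 1) → ℝ), IsUnitIntervalPartition p ∧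
      ∀ z ∈ E, ∀ j : Fin N, z ∉ Ioo (p j.castSucc) (p j.succ) := by
  classical
  set P : Finset ℝ := insert 0 (insert 1 (E.filter (· ∈ Icc (0 : ℝ) 1)))
  have hP : ∀ z ∈ P, z ∈ Icc (0 : ℝ) 1 := by
    intro z hz
    simp only [P, Finset.mem_insert, Finset.mem_filter] at hz
    rcases hz with rfl | rfl | ⟨-, hz⟩ <;> simp [*]
  obtain ⟨N, hN⟩ : ∃ N, P.card = N + 1 :=
    ⟨P.card - 1, (Nat.succ_pred_eq_of_pos (Finset.card_pos.2 ⟨0, by simp [P]⟩)).symm⟩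
  set p := P.orderEmbOfFin hN
  have hrange : ∀ z ∈ P, ∃ m, p m = z := fun z hz => by
    rw [← Set.mem_range, Finset.range_orderEmbOfFin]; exact hz
  have hp01 : ∀ m, p m ∈ Icc (0 : ℝ) 1 := fun m => hP _ (P.orderEmbOfFin_mem hN m)
  obtain ⟨m0, hm0⟩ := hrange 0 (by simp [P])
  obtain ⟨m1, hm1⟩ := hrange 1 (by simp [P])
  refine ⟨N, p, ⟨p.strictMono, le_antisymm (hm0 ▸ p.monotone (Fin.zero_le m0)) (hp01 0).1,
    le_antisymm (hp01 _).2 (hm1 ▸ p.monotone (Fin.le_last m1))⟩, fun z hz j hzj => ?_⟩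
  by_cases hz01 : z ∈ Icc (0 : ℝ) 1
  · obtain ⟨m, rfl⟩ := hrange z (by simp only [P, Finset.mem_insert, Finset.mem_filter]; tauto)
    have h1 := p.strictMono.lt_iff_lt.1 hzj.1
    have h2 := p.strictMono.lt_iff_lt.1 hzj.2
    rw [Fin.lt_def, Fin.val_castSucc] at h1
    rw [Fin.lt_def, Fin.val_succ] at h2
    omega
  · exact hz01 ⟨(hp01 _).1.trans hzj.1.le, hzj.2.le.trans (hp01 _).2⟩

namespace IsUnitIntervalPartition

variable {N : ℕ} {p : Fin (N + 1) → ℝ}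

lemma le_succ (hp : IsUnitIntervalPartition p) (j : Fin N) : p j.castSucc ≤ p j.succ :=
  hp.strictMono.monotone (Fin.castSucc_le_succ j)

lemma Icc_subset (hp : IsUnitIntervalPartition p) (j : Fin N) :
    Icc (p j.castSucc) (p j.succ) ⊆ Icc 0 1 :=
  Icc_subset_Icc (hp.map_zero ▸ hp.strictMono.monotone (Fin.zero_le _))
    (hp.map_last ▸ hp.strictMono.monotone (Fin.le_last _))

lemma exists_mem_Ioo (hp : IsUnitIntervalPartition p) {x : ℝ} (hx : x ∈ Icc (0 : ℝ) 1)
    (hxp : x ∉ range p) : ∃ j : Fin N, x ∈ Ioo (p j.castSucc) (p j.succ) := by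
  have hx1 : x < p (Fin.last N) :=
    hp.map_last ▸ hx.2.lt_of_ne fun h => hxp ⟨_, hp.map_last.trans h.symm⟩
  obtain ⟨j, hj, hxj⟩ := exists_castSucc_le_and_lt_succ p (hp.map_zero ▸ hx.1) hx1
  exact ⟨j, hj.lt_of_ne fun h => hxp ⟨_, h⟩, hxj⟩

lemma volume_Icc_inter_Icc (hp : IsUnitIntervalPartition p) {j j' : Fin N} (h : j ≠ j') :
    volume (Icc (p j.castSucc) (p j.succ) ∩ Icc (p j'.castSucc) (p j'.succ)) = 0 := by
  wlog hlt : j < j' generalizing j j'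
  · rw [inter_comm]
    exact this h.symm (h.lt_or_gt.resolve_left hlt)
  exact volume_Icc_inter_Icc_of_le (hp.strictMono.monotone (Fin.succ_le_castSucc_iff.2 hlt))

lemma integrableOn_Icc_zero_one (hp : IsUnitIntervalPartition p) {f : ℝ → ℝ}
    (hf : ∀ j : Fin N, ∃ c, ∀ x ∈ Ioo (p j.castSucc) (p j.succ), f x = c) :
    IntegrableOn f (Icc 0 1) := by
  have hcells : IntegrableOn f (⋃ j : Fin N, Ioo (p j.castSucc) (p j.succ)) :=
    integrableOn_finite_iUnion.2 fun j => (hf j).elim fun _ hc => integrableOn_Ioo_of_eqOn hc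
  refine hcells.mono_set_ae (ae_le_set.2 (measure_mono_null (fun x ⟨hx, hxU⟩ => ?_)
    ((finite_range p).measure_zero _)))
  by_contra hxp
  obtain ⟨j, hj⟩ := hp.exists_mem_Ioo hx hxp
  exact hxU (mem_iUnion.2 ⟨j, hj⟩)

end IsUnitIntervalPartition

section CellParts

variable {N : ℕ} (p : Fin (N + 1) → ℝ)

def cellPart (j : Fin N) (s t : ℝ) : Set ℝ :=
  Icc (p j.castSucc + s * (p j.succ - p j.castSucc)) (p j.castSucc + t * (p j.succ - p j.castSucc))

def cellParts (S : Set ℝ) (s t : ℝ) : Set ℝ :=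
  ⋃ j : {j : Fin N // Ioo (p j.castSucc) (p j.succ) ⊆ S}, cellPart p j s t

lemma finUnionIcc_cellParts (S : Set ℝ) (s t : ℝ) : FinUnionIcc (cellParts p S s t) :=
  finUnionIcc_iUnion_Icc _ _

lemma measurableSet_cellParts (S : Set ℝ) (s t : ℝ) : MeasurableSet (cellParts p S s t) :=
  MeasurableSet.iUnion fun _ => measurableSet_Icc

def IsCellAligned (S : Set ℝ) : Prop :=
  ∀ j : Fin N, Ioo (p j.castSucc) (p j.succ) ⊆ S ∨ Disjoint (Ioo (p j.castSucc) (p j.succ)) S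

variable {p}

lemma cellPart_zero_one (j : Fin N) : cellPart p j 0 1 = Icc (p j.castSucc) (p j.succ) := by
  simp [cellPart]

lemma cellPart_subset (hp : IsUnitIntervalPartition p) (j : Fin N) {s t : ℝ} (hs : 0 ≤ s)
    (ht : t ≤ 1) : cellPart p j s t ⊆ Icc (p j.castSucc) (p j.succ) := by
  have := hp.le_succ j
  exact Icc_subset_Icc (by nlinarith) (by nlinarith)

lemma cellParts_subset (hp : IsUnitIntervalPartition p) (S : Set ℝ) {s t : ℝ} (hs : 0 ≤ s)
    (ht : t ≤ 1) : cellParts p S s t ⊆ Icc 0 1 :=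
  iUnion_subset fun j => (cellPart_subset hp j hs ht).trans (hp.Icc_subset j)

lemma cakeval_cellPart (hp : IsUnitIntervalPartition p) {f : ℝ → ℝ} {j : Fin N} {c : ℝ}
    (hf : ∀ x ∈ Ioo (p j.castSucc) (p j.succ), f x = c) {s t : ℝ} (hs : 0 ≤ s) (hst : s ≤ t)
    (ht : t ≤ 1) : cakeval f (cellPart p j s t) = (t - s) * cakeval f (cellPart p j 0 1) := by
  have := hp.le_succ j
  have hsub : Ioo (p j.castSucc + s * (p j.succ - p j.castSucc))
      (p j.castSucc + t * (p j.succ - p j.castSucc)) ⊆ Ioo (p j.castSucc) (p j.succ) :=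
    Ioo_subset_Ioo (by nlinarith) (by nlinarith)
  rw [cellPart_zero_one, cakeval_Icc_of_eqOn_Ioo this hf, cellPart,
    cakeval_Icc_of_eqOn_Ioo (by nlinarith) fun x hx => hf x (hsub hx)]
  ring

lemma volume_cellParts_inter_cellParts (hp : IsUnitIntervalPartition p) {S T : Set ℝ}
    {s t s' t' : ℝ} (hs : 0 ≤ s) (ht : t ≤ 1) (hs' : 0 ≤ s') (ht' : t' ≤ 1)
    (h : ∀ j, Ioo (p j.castSucc) (p j.succ) ⊆ S → Ioo (p j.castSucc) (p j.succ) ⊆ T →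
      volume (cellPart p j s t ∩ cellPart p j s' t') = 0) :
    volume (cellParts p S s t ∩ cellParts p T s' t') = 0 := by
  rw [cellParts, cellParts, iUnion_inter_iUnion]
  refine measure_iUnion_null fun ⟨j, hjS⟩ => measure_iUnion_null fun ⟨j', hj'T⟩ => ?_
  by_cases hjj : j = j'
  · subst hjj
    exact h j hjS hj'T
  · exact measure_mono_null (inter_subset_inter (cellPart_subset hp j hs ht)
      (cellPart_subset hp j' hs' ht')) (hp.volume_Icc_inter_Icc hjj)

lemma volume_cellParts_inter_cellParts_of_le (hp : IsUnitIntervalPartition p) (S T : Set ℝ)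
    {s t s' t' : ℝ} (hs : 0 ≤ s) (ht : t ≤ 1) (hs' : 0 ≤ s') (ht' : t' ≤ 1) (hts' : t ≤ s') :
    volume (cellParts p S s t ∩ cellParts p T s' t') = 0 := by
  refine volume_cellParts_inter_cellParts hp hs ht hs' ht' fun j _ _ => ?_
  have := hp.le_succ j
  exact volume_Icc_inter_Icc_of_le (by nlinarith)

lemma volume_cellParts_inter_cellParts_of_null (hp : IsUnitIntervalPartition p) {S T : Set ℝ}
    (hST : volume (S ∩ T) = 0) {s t s' t' : ℝ} (hs : 0 ≤ s) (ht : t ≤ 1) (hs' : 0 ≤ s')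
    (ht' : t' ≤ 1) : volume (cellParts p S s t ∩ cellParts p T s' t') = 0 := by
  refine volume_cellParts_inter_cellParts hp hs ht hs' ht' fun j hjS hjT => ?_
  have hpos : 0 < volume (Ioo (p j.castSucc) (p j.succ)) := by
    simpa using hp.strictMono (Fin.castSucc_lt_succ (i := j))
  exact absurd (measure_mono_null (subset_inter hjS hjT) hST) hpos.ne'

lemma cellParts_zero_one_ae_eq (hp : IsUnitIntervalPartition p) {S : Set ℝ} (hS : S ⊆ Icc 0 1)
    (hal : IsCellAligned p S) :
    cellParts p S 0 1 =ᵐ[volume] S := by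
  have hnull : volume (range p) = 0 := (finite_range p).measure_zero _
  refine ae_eq_set.2 ⟨measure_mono_null (fun x ⟨hx, hxS⟩ => ?_) hnull,
    measure_mono_null (fun x ⟨hxS, hx⟩ => ?_) hnull⟩
  · obtain ⟨⟨j, hj⟩, hxj⟩ := mem_iUnion.1 hx
    rw [cellPart_zero_one] at hxj
    rcases hxj.1.eq_or_lt with h | h
    · exact ⟨_, h⟩
    rcases hxj.2.eq_or_lt with h' | h'
    · exact ⟨_, h'.symm⟩
    exact absurd (hj ⟨h, h'⟩) hxS
  · by_contra hxp
    obtain ⟨j, hj⟩ := hp.exists_mem_Ioo (hS hxS) hxp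
    have hjS := (hal j).resolve_right (not_disjoint_iff.2 ⟨x, hj, hxS⟩)
    exact hx (mem_iUnion.2 ⟨⟨j, hjS⟩, (cellPart_zero_one j).symm ▸ Ioo_subset_Icc_self hj⟩)

lemma cakeval_cellParts (hp : IsUnitIntervalPartition p) {f : ℝ → ℝ}
    (hf : ∀ j : Fin N, ∃ c, ∀ x ∈ Ioo (p j.castSucc) (p j.succ), f x = c) {S : Set ℝ}
    (hS : S ⊆ Icc 0 1)
    (hal : IsCellAligned p S)
    {s t : ℝ} (hs : 0 ≤ s) (hst : s ≤ t) (ht : t ≤ 1) :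
    cakeval f (cellParts p S s t) = (t - s) * cakeval f S := by
  classical
  have hsum : ∀ s t : ℝ, 0 ≤ s → t ≤ 1 → cakeval f (cellParts p S s t) =
      ∑ j : {j : Fin N // Ioo (p j.castSucc) (p j.succ) ⊆ S}, cakeval f (cellPart p j s t) :=
    fun s t hs ht => cakeval_iUnion (fun _ => measurableSet_Icc.nullMeasurableSet)
      (fun j j' hjj => measure_mono_null (inter_subset_inter (cellPart_subset hp j hs ht)
        (cellPart_subset hp j' hs ht)) (hp.volume_Icc_inter_Icc fun h => hjj (Subtype.ext h)))
      (by exact (hp.integrableOn_Icc_zero_one hf).mono_set (cellParts_subset hp S hs ht))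
  rw [show cakeval f S = cakeval f (cellParts p S 0 1) from
      setIntegral_congr_set (cellParts_zero_one_ae_eq hp hS hal).symm,
    hsum s t hs ht, hsum 0 1 le_rfl le_rfl, Finset.mul_sum]
  refine Finset.sum_congr rfl fun j _ => ?_
  obtain ⟨c, hc⟩ := hf j
  exact cakeval_cellPart hp hc hs hst ht

end CellParts

lemma exists_unitIntervalPartition_cellwise_const {ι : Type*} [Fintype ι] {f : ι → ℝ → ℝ}
    (hf : ∀ i, PiecewiseConstant (f i)) (E : Finset ℝ) :
    ∃ (N : ℕ) (p : Fin (N + 1) → ℝ), IsUnitIntervalPartition p ∧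
      (∀ z ∈ E, ∀ j : Fin N, z ∉ Ioo (p j.castSucc) (p j.succ)) ∧
      ∀ i (j : Fin N), ∃ c, ∀ x ∈ Ioo (p j.castSucc) (p j.succ), f i x = c := by
  classical
  choose Ef hEf using fun i => (hf i).exists_breakpoints
  obtain ⟨N, p, hp, hE⟩ := exists_unitIntervalPartition_avoiding (E ∪ Finset.univ.biUnion Ef)
  refine ⟨N, p, hp, fun z hz => hE z (Finset.mem_union_left _ hz), fun i j => ?_⟩
  have hj := hp.Icc_subset j
  refine hEf i _ _ (hj ⟨le_rfl, hp.le_succ j⟩).1 (hp.strictMono Fin.castSucc_lt_succ)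
    (hj ⟨hp.le_succ j, le_rfl⟩).2 fun z hz => hE z ?_ j
  exact Finset.mem_union_right _ (Finset.mem_biUnion.2 ⟨i, Finset.mem_univ i, hz⟩)

lemma exists_isAlloc_cakeval_pos {n : ℕ} {f : Fin n → ℝ → ℝ} (hf : ∀ i, ValidDensity (f i)) :
    ∃ W : Fin n → Set ℝ, IsAlloc W ∧ ∀ i, 0 < cakeval (f i) (W i) := by
  obtain ⟨N, p, hp, -, hconst⟩ := exists_unitIntervalPartition_cellwise_const (fun i => (hf i).1) ∅
  have hbounds : ∀ i : Fin n, 0 ≤ (i : ℝ) / n ∧ (i : ℝ) / n ≤ ((i : ℝ) + 1) / n ∧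
      ((i : ℝ) + 1) / n ≤ 1 := fun i => by
    have hn : (0 : ℝ) < n := by exact_mod_cast i.pos
    refine ⟨by positivity, by gcongr; linarith, (div_le_one hn).2 ?_⟩
    exact_mod_cast i.isLt
  refine ⟨fun i => cellParts p (Icc 0 1) (i / n) ((i + 1) / n),
    ⟨fun i => cellParts_subset hp _ (hbounds i).1 (hbounds i).2.2,
      fun i => finUnionIcc_cellParts p _ _ _, fun i i' hii' => ?_⟩, fun i => ?_⟩
  · wlog hlt : i < i' generalizing i i'
    · rw [inter_comm]
      exact this i' i hii'.symm (hii'.lt_or_gt.resolve_left hlt)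
    refine volume_cellParts_inter_cellParts_of_le hp _ _ (hbounds i).1 (hbounds i).2.2
      (hbounds i').1 (hbounds i').2.2 ?_
    gcongr
    exact_mod_cast Nat.succ_le_of_lt hlt
  · rw [cakeval_cellParts hp (hconst i) subset_rfl
      (fun j => .inl (Ioo_subset_Icc_self.trans (hp.Icc_subset j))) (hbounds i).1 (hbounds i).2.1
      (hbounds i).2.2]
    have hn : (0 : ℝ) < n := by exact_mod_cast i.pos
    have := (hf i).2.2
    field_simp
    linarith

lemma exists_isAlloc_cakeval_eq_midpoint {n : ℕ} {f : Fin n → ℝ → ℝ}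
    (hf : ∀ i, PiecewiseConstant (f i)) {A A' : Fin n → Set ℝ} (hA : IsAlloc A)
    (hA' : IsAlloc A') :
    ∃ B : Fin n → Set ℝ, IsAlloc B ∧
      ∀ i, cakeval (f i) (B i) = (cakeval (f i) (A i) + cakeval (f i) (A' i)) / 2 := by
  classical
  choose EA hEA using fun i => (hA.2.1 i).exists_breakpoints
  choose EA' hEA' using fun i => (hA'.2.1 i).exists_breakpoints
  obtain ⟨N, p, hp, hE, hconst⟩ := exists_unitIntervalPartition_cellwise_const hf
    (Finset.univ.biUnion EA ∪ Finset.univ.biUnion EA')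
  have hal : ∀ i, IsCellAligned p (A i) := fun i j => hEA i _ _ fun z hz =>
    hE z (Finset.mem_union_left _ (Finset.mem_biUnion.2 ⟨i, Finset.mem_univ i, hz⟩)) j
  have hal' : ∀ i, IsCellAligned p (A' i) := fun i j => hEA' i _ _ fun z hz =>
    hE z (Finset.mem_union_right _ (Finset.mem_biUnion.2 ⟨i, Finset.mem_univ i, hz⟩)) j
  have h0 : (0 : ℝ) ≤ 1 / 2 := by norm_num
  have h1 : (1 / 2 : ℝ) ≤ 1 := by norm_num
  refine ⟨fun i => cellParts p (A i) 0 (1 / 2) ∪ cellParts p (A' i) (1 / 2) 1,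
    ⟨fun i => union_subset (cellParts_subset hp _ le_rfl h1) (cellParts_subset hp _ h0 le_rfl),
      fun i => (finUnionIcc_cellParts p _ _ _).union (finUnionIcc_cellParts p _ _ _),
      fun i i' hii' => ?_⟩, fun i => ?_⟩
  · show volume (_ ∩ _) = 0
    rw [union_inter_distrib_right, inter_union_distrib_left, inter_union_distrib_left]
    exact measure_union_null
      (measure_union_null
        (volume_cellParts_inter_cellParts_of_null hp (hA.2.2 hii') le_rfl h1 le_rfl h1)
        (volume_cellParts_inter_cellParts_of_le hp _ _ le_rfl h1 h0 le_rfl le_rfl))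
      (measure_union_null
        (inter_comm (cellParts p (A' i) _ _) _ ▸
          volume_cellParts_inter_cellParts_of_le hp _ _ le_rfl h1 h0 le_rfl le_rfl)
        (volume_cellParts_inter_cellParts_of_null hp (hA'.2.2 hii') h0 le_rfl h0 le_rfl))
  · have hint : ∀ S s t, 0 ≤ s → t ≤ 1 → IntegrableOn (f i) (cellParts p S s t) :=
      fun S s t hs ht => ((hp.integrableOn_Icc_zero_one (hconst i)).mono_set
        (cellParts_subset hp S hs ht))
    rw [cakeval, setIntegral_union₀
        (volume_cellParts_inter_cellParts_of_le hp _ _ le_rfl h1 h0 le_rfl le_rfl)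
        (measurableSet_cellParts p _ _ _).nullMeasurableSet (hint _ _ _ le_rfl h1)
        (hint _ _ _ h0 le_rfl),
      ← cakeval, ← cakeval, cakeval_cellParts hp (hconst i) (hA.1 i) (hal i) le_rfl h0 h1,
      cakeval_cellParts hp (hconst i) (hA'.1 i) (hal' i) h0 h1 le_rfl]
    ring

/-- Corollary 2.2 (uniqueness of MNW utilities): if `A` and `A'` are both MNW
allocations with respect to the same profile, then every agent receives the same
value in `A` and in `A'`. -/
theorem mnw_utilities_unique (n : ℕ) (f : Fin n → ℝ → ℝ)
    (hf : ∀ i, ValidDensity (f i))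
    (A A' : Fin n → Set ℝ) (hA : IsMNW f A) (hA' : IsMNW f A') :
    ∀ i, cakeval (f i) (A i) = cakeval (f i) (A' i) := by
  obtain ⟨W, hW, hWpos⟩ := exists_isAlloc_cakeval_pos hf
  obtain ⟨B, hB, hBval⟩ := exists_isAlloc_cakeval_eq_midpoint (fun i => (hf i).1) hA.1 hA'.1
  have hAA' : nashProd f A = nashProd f A' := le_antisymm (hA'.2 A hA.1) (hA.2 A' hA'.1)
  have hApos : 0 < nashProd f A := (Finset.prod_pos fun k _ => hWpos k).trans_le (hA.2 W hW)
  have hpos : ∀ C : Fin n → Set ℝ, 0 < nashProd f C → ∀ k, 0 < cakeval (f k) (C k) :=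
    fun C hC k => (cakeval_nonneg (hf k).2.1 _).lt_of_ne
      (Finset.prod_ne_zero_iff.1 hC.ne' k (Finset.mem_univ k)).symm
  by_contra hne
  have hBmid : nashProd f B = ∏ k, (cakeval (f k) (A k) + cakeval (f k) (A' k)) / 2 :=
    Finset.prod_congr rfl fun k _ => hBval k
  have hlt : nashProd f A * nashProd f A' < nashProd f B ^ 2 :=
    hBmid ▸ prod_mul_prod_lt_sq_prod_midpoint (hpos A hApos) (hpos A' (hAA' ▸ hApos))
      fun h => hne (congrFun h)
  have hBA : nashProd f B ≤ nashProd f A := hA.2 B hB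
  have hB0 : 0 ≤ nashProd f B := Finset.prod_nonneg fun k _ => cakeval_nonneg (hf k).2.1 _
  rw [← hAA'] at hlt
  nlinarith
end
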